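/- For every ε with 0 < ε < 1 there exists a constant c > 0 (depending only on ε) such that for all natural numbers n ≥ 2 and t, t_e with 1 ≤ t + t_e ≤ n^{1−ε} and t + 1 ≤ n, every t-breaks t_e-edit-errors resilient code C ⊆ {0,1}^n has redundancy n − log₂|C| ≥ c·(t+t_e)·log₂ n. (Thus the existential construction of redundancy O((t+t_e)·log n·log log n) is near optimal when t + t_e = O(n^{1−ε}).) -/

import Mathlib

/-- Cost structure for the Levenshtein distance (removed from Mathlib; restored with its old meaning). -/
structure Levenshtein.Cost (α β δ : Type*) where
  delete : α → δ
  insert : β → δ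
  substitute : α → β → δ

/-- The default unit cost (restored from old Mathlib). -/
def Levenshtein.defaultCost {α : Type*} [DecidableEq α] : Levenshtein.Cost α α ℕ where
  delete _ := 1
  insert _ := 1
  substitute a b := if a = b then 0 else 1

/-- Levenshtein distance (removed from Mathlib; defined by the recursion old Mathlib proved for it). -/
def levenshtein {α β δ : Type*} [AddZeroClass δ] [Min δ] (C : Levenshtein.Cost α β δ) :
    List α → List β → δ
  | [], [] => 0
  | [], y :: ys => C.insert y + levenshtein C [] ys
  | x :: xs, [] => C.delete x + levenshtein C xs []
  | x :: xs, y :: ys =>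
    min (C.delete x + levenshtein C xs (y :: ys))
      (min (C.insert y + levenshtein C (x :: xs) ys) (C.substitute x y + levenshtein C xs ys))

/-- The edit (Levenshtein) distance between two binary words. -/
def editDist (x y : List Bool) : ℕ :=
  levenshtein Levenshtein.defaultCost x y

/-- The `t`-breaks `te`-edit-errors channel output set of a binary word `w`. -/
def BreakEdit (t te : ℕ) (w : List Bool) : Set (Multiset (List Bool)) :=
  { S | Multiset.card S = t + 1 ∧ (∀ f ∈ S, f ≠ []) ∧
      ∃ l : List (List Bool), (l : Multiset (List Bool)) = S ∧ editDist l.flatten w ≤ te }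

/-- A code is `t`-breaks `te`-edit-errors resilient if the channel output sets of
distinct codewords are disjoint. -/
def ResilientBE (t te : ℕ) (C : Finset (List Bool)) : Prop :=
  ∀ c ∈ C, ∀ c' ∈ C, c ≠ c' → BreakEdit t te c ∩ BreakEdit t te c' = ∅

/-!
A resilient code cannot contain two codewords `c ≠ c'` such that some word cut into at most
`t + 1` pieces lies within edit distance `te` of `c`, while a permutation of the same pieces
lies within edit distance `te` of `c'`. Two packing bounds follow.

* Flipping exactly `te` bits of a codeword moves it by edit distance at most `te`, so these
  Hamming spheres are disjoint: `|C| · (n choose te) ≤ 2 ^ n`, a redundancy of about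
  `te · log (n / te)`.
* Cut a codeword into `j ≈ t / 2` chunks of length `L ≈ n / j`. Rotating a chunk costs two
  pieces, so a codeword is determined by the necklaces (rotation classes) of its chunks. There
  are at most about `2 ^ L / L` binary necklaces of length `L`, so `|C| · L ^ j ≤ 2 ^ (n + j)`,
  a redundancy of about `t · log (n / t)`.

When `t + te ≤ n ^ (1 - ε)` both logarithms are at least `ε log n`. For the finitely many
small `n` it is enough that a resilient code misses at least one word.
-/

open Real

lemma editDist_cons_cons_le (a b : Bool) (x y : List Bool) :
    editDist (a :: x) (b :: y) ≤ (if a = b then 0 else 1) + editDist x y := by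
  rw [editDist, levenshtein]
  exact (min_le_right _ _).trans (min_le_right _ _)

@[simp] lemma editDist_self (w : List Bool) : editDist w w = 0 := by
  induction w with
  | nil => rw [editDist, levenshtein]
  | cons a w ih => simpa [ih] using editDist_cons_cons_le a a w w

lemma editDist_ofFn_le_hammingDist {m : ℕ} (f g : Fin m → Bool) :
    editDist (List.ofFn f) (List.ofFn g) ≤ hammingDist f g := by
  induction m with
  | zero => simp
  | succ m ih =>
    have hsplit : hammingDist f g =
        (if f 0 ≠ g 0 then 1 else 0) + hammingDist (Fin.tail f) (Fin.tail g) := by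
      rw [hammingDist, hammingDist, Finset.card_filter, Finset.card_filter, Fin.sum_univ_succ]
      rfl
    rw [List.ofFn_succ, List.ofFn_succ, hsplit]
    exact (editDist_cons_cons_le _ _ _ _).trans (add_le_add (by split_ifs <;> simp_all) (ih _ _))

section Refinement

variable {α : Type*}

lemma exists_perm_split {l l' : List (List α)} (hp : l.Perm l') (hne : ∀ f ∈ l, f ≠ [])
    (hlt : l.length < l.flatten.length) :
    ∃ r r' : List (List α), r.Perm r' ∧ (∀ f ∈ r, f ≠ []) ∧ r.length = l.length + 1 ∧
      r.flatten = l.flatten ∧ r'.flatten = l'.flatten := by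
  obtain ⟨f, hf, hflen⟩ : ∃ f ∈ l, 2 ≤ f.length := by
    by_contra! h
    have : (l.map List.length).sum ≤ l.length := by
      simpa using
        List.sum_le_card_nsmul (l.map List.length) 1 (by simpa [Nat.lt_succ_iff] using h)
    rw [List.length_flatten] at hlt
    omega
  obtain ⟨x, y, rfl⟩ := List.append_of_mem hf
  obtain ⟨x', y', rfl⟩ := List.append_of_mem (hp.subset hf)
  obtain ⟨a, g, rfl⟩ := List.exists_cons_of_ne_nil (hne _ hf)
  have hg : g ≠ [] := by rintro rfl; simp at hflen
  refine ⟨x ++ [a] :: g :: y, x' ++ [a] :: g :: y', ?_, ?_, by simp; omega, by simp, by simp⟩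
  · have hxy : (x ++ y).Perm (x' ++ y') :=
      (List.perm_middle.symm.trans (hp.trans List.perm_middle)).cons_inv
    have hmid : ∀ u v : List (List α), (u ++ [a] :: g :: v).Perm ([a] :: g :: (u ++ v)) :=
      fun _ _ => List.perm_middle.trans (List.perm_middle.cons _)
    exact (hmid x y).trans (((hxy.cons g).cons [a]).trans (hmid x' y').symm)
  · intro f hf
    simp only [List.mem_append, List.mem_cons] at hf
    rcases hf with hf | rfl | rfl | hf
    · exact hne f (by simp [hf])
    · simp
    · exact hg
    · exact hne f (by simp [hf])

lemma exists_perm_refinement {l l' : List (List α)} (hp : l.Perm l') (hne : ∀ f ∈ l, f ≠ [])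
    {m : ℕ} (hlm : l.length ≤ m) (hm : m ≤ l.flatten.length) :
    ∃ r r' : List (List α), r.Perm r' ∧ (∀ f ∈ r, f ≠ []) ∧ r.length = m ∧
      r.flatten = l.flatten ∧ r'.flatten = l'.flatten := by
  induction m, hlm using Nat.le_induction with
  | base => exact ⟨l, l', hp, hne, rfl, rfl, rfl⟩
  | succ m hlm ih =>
    obtain ⟨r, r', hr, hrne, hrm, hrf, hrf'⟩ := ih (by omega)
    obtain ⟨s, s', hs, hsne, hsm, hsf, hsf'⟩ := exists_perm_split hr hrne (by rw [hrf]; omega)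
    exact ⟨s, s', hs, hsne, by omega, hsf.trans hrf, hsf'.trans hrf'⟩

end Refinement

section Resilient

variable {t te : ℕ} {C : Finset (List Bool)}

theorem ResilientBE.eq_of_perm (hres : ResilientBE t te C) {c c' : List Bool} (hc : c ∈ C)
    (hc' : c' ∈ C) {l l' : List (List Bool)} (hp : l.Perm l') (hl : l.length ≤ t + 1)
    (hw : t + 1 ≤ l.flatten.length) (he : editDist l.flatten c ≤ te)
    (he' : editDist l'.flatten c' ≤ te) : c = c' := by
  by_contra hcc
  obtain ⟨r, r', hr, hrne, hrt, hrf, hrf'⟩ := exists_perm_refinement (hp.filter (· ≠ []))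
    (fun f hf => by simpa using (List.mem_filter.1 hf).2)
    ((List.length_filter_le _ _).trans hl) (by rwa [List.flatten_filter_ne_nil])
  rw [List.flatten_filter_ne_nil] at hrf hrf'
  have hS : (r : Multiset (List Bool)) ∈ BreakEdit t te c ∩ BreakEdit t te c' :=
    ⟨⟨by simpa using hrt, by simpa using hrne, r, rfl, hrf ▸ he⟩,
      ⟨by simpa using hrt, by simpa using hrne, r', Multiset.coe_eq_coe.2 hr.symm, hrf' ▸ he'⟩⟩
  simp [hres c hc c' hc' hcc] at hS

theorem ResilientBE.eq_of_editDist_le (hres : ResilientBE t te C) {c c' w : List Bool}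
    (hc : c ∈ C) (hc' : c' ∈ C) (hw : t + 1 ≤ w.length) (he : editDist w c ≤ te)
    (he' : editDist w c' ≤ te) : c = c' :=
  hres.eq_of_perm hc hc' (List.Perm.refl [w]) (by simp) (by simpa using hw)
    (by simpa using he) (by simpa using he')

end Resilient

def words (m : ℕ) : Finset (List Bool) :=
  Finset.univ.image (List.ofFn : (Fin m → Bool) → List Bool)

@[simp] lemma mem_words {m : ℕ} {w : List Bool} : w ∈ words m ↔ w.length = m := by
  constructor
  · intro h
    obtain ⟨f, -, rfl⟩ := Finset.mem_image.1 h
    exact List.length_ofFn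
  · rintro rfl
    exact Finset.mem_image.2 ⟨fun i => w[i], Finset.mem_univ _, List.ofFn_getElem⟩

lemma card_words (m : ℕ) : (words m).card = 2 ^ m := by
  simp [words, Finset.card_image_of_injective _ List.ofFn_injective]

def flipAt {n : ℕ} (f : Fin n → Bool) (S : Finset (Fin n)) : Fin n → Bool :=
  fun i => if i ∈ S then !f i else f i

lemma hammingDist_flipAt {n : ℕ} (f : Fin n → Bool) (S : Finset (Fin n)) :
    hammingDist (flipAt f S) f = S.card := by
  rw [hammingDist]
  congr 1
  ext i
  by_cases hi : i ∈ S <;> simp [flipAt, hi]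

lemma flipAt_injective {n : ℕ} (f : Fin n → Bool) : Function.Injective (flipAt f) := by
  intro S S' h
  ext i
  have := congrFun h i
  by_cases hi : i ∈ S <;> by_cases hi' : i ∈ S' <;> simp_all [flipAt]

theorem ResilientBE.card_mul_choose_le {n t te : ℕ} {C : Finset (List Bool)}
    (hres : ResilientBE t te C) (hlen : ∀ w ∈ C, w.length = n) (htn : t + 1 ≤ n) :
    C.card * n.choose te ≤ 2 ^ n := by
  obtain ⟨C₀, -, rfl⟩ := Finset.subset_image_iff.1
    (show C ⊆ words n from fun w hw => mem_words.2 (hlen w hw))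
  rw [Finset.card_image_of_injective _ List.ofFn_injective]
  have hinj : Set.InjOn (fun p : (Fin n → Bool) × Finset (Fin n) => flipAt p.1 p.2)
      (C₀ ×ˢ Finset.univ.powersetCard te : Finset ((Fin n → Bool) × Finset (Fin n))) := by
    rintro ⟨f, S⟩ hfS ⟨f', S'⟩ hfS' (h : flipAt f S = flipAt f' S')
    simp only [Finset.coe_product, Set.mem_prod, Finset.mem_coe, Finset.mem_powersetCard]
      at hfS hfS'
    have hdist : ∀ (g : Fin n → Bool) (T : Finset (Fin n)), T.card = te →
        editDist (List.ofFn (flipAt g T)) (List.ofFn g) ≤ te := fun g T hT =>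
      (editDist_ofFn_le_hammingDist _ _).trans (hammingDist_flipAt g T ▸ hT.le)
    have hff' : f = f' := List.ofFn_injective <|
      hres.eq_of_editDist_le (Finset.mem_image_of_mem _ hfS.1) (Finset.mem_image_of_mem _ hfS'.1)
        (by simpa using htn) (hdist f S hfS.2.2) (h ▸ hdist f' S' hfS'.2.2)
    subst hff'
    rw [flipAt_injective f h]
  simpa [Finset.card_product] using
    Finset.card_le_card_of_injOn _ (fun _ _ => Finset.mem_univ _) hinj

section Periodic

variable {α : Type*}

lemma getElem_eq_of_rotate_eq_self {u : List α} {z i : ℕ} (hu : u.rotate z = u) (hzi : z ≤ i)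
    (hi : i < u.length) : u[i] = u[i - z] := by
  have h := List.getElem_rotate u z (i - z) (by simp; omega)
  simp only [hu, Nat.sub_add_cancel hzi, Nat.mod_eq_of_lt hi] at h
  exact h.symm

lemma eq_of_rotate_eq_self_of_take_eq {u v : List α} {z : ℕ} (hz : 0 < z)
    (hu : u.rotate z = u) (hv : v.rotate z = v) (hlen : u.length = v.length)
    (htake : u.take z = v.take z) : u = v := by
  refine List.ext_getElem hlen fun i hi hi' => ?_
  induction i using Nat.strong_induction_on with
  | _ i ih =>
    rcases lt_or_ge i z with hiz | hiz
    · have := congrArg (fun l => l[i]?) htake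
      simpa [List.getElem?_take, hiz, hi, hi'] using this
    · rw [getElem_eq_of_rotate_eq_self hu hiz hi, getElem_eq_of_rotate_eq_self hv hiz hi']
      exact ih (i - z) (by omega) _ _

lemma card_filter_rotate_eq_self_le {m z : ℕ} (hz : 0 < z) (hzm : z ≤ m) :
    ((words m).filter fun u => u.rotate z = u).card ≤ 2 ^ z := by
  rw [← card_words z]
  refine Finset.card_le_card_of_injOn (List.take z) (fun u hu => ?_) fun u hu v hv h => ?_
  · simp only [Finset.mem_coe, Finset.mem_filter, mem_words] at hu
    simp [hu.1, hzm]
  · simp only [Finset.mem_coe, Finset.mem_filter, mem_words] at hu hv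
    exact eq_of_rotate_eq_self_of_take_eq hz hu.2 hv.2 (hu.1.trans hv.1.symm) h

end Periodic

def necklaces (m : ℕ) : Finset (Cycle Bool) := (words m).image (↑)

def necklaceWords (m : ℕ) (q : Cycle Bool) : Finset (List Bool) :=
  (words m).filter fun u : List Bool => (u : Cycle Bool) = q

lemma exists_rotate_eq_self_of_card_lt {m : ℕ} {u : List Bool} (hu : u.length = m)
    (h : (necklaceWords m u).card < m) :
    ∃ z ∈ Finset.Icc 1 (m / 2), u.rotate z = u := by
  have period : ∀ i j, i < j → j < m → u.rotate i = u.rotate j →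
      ∃ z ∈ Finset.Icc 1 (m / 2), u.rotate z = u := by
    intro i j hij hjm hrot
    have hz : u.rotate (j - i) = u := by
      rw [← List.rotate_eq_rotate (n := i), List.rotate_rotate, Nat.sub_add_cancel hij.le, hrot]
    rcases le_or_gt (j - i) (m / 2) with hle | hgt
    · exact ⟨j - i, Finset.mem_Icc.2 ⟨by omega, hle⟩, hz⟩
    · refine ⟨m - (j - i), Finset.mem_Icc.2 ⟨by omega, by omega⟩, ?_⟩
      conv_lhs => rw [← hz]
      rw [List.rotate_rotate, Nat.add_sub_cancel' (by omega : j - i ≤ m)]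
      exact hu ▸ u.rotate_length
  obtain ⟨i, hi, j, hj, hij, hrot⟩ := Finset.exists_ne_map_eq_of_card_lt_of_maps_to
    (s := Finset.range m) (f := u.rotate) (by simpa using h) fun i _ => by
      simp [necklaceWords, hu]
  rw [Finset.mem_range] at hi hj
  rcases lt_or_gt_of_ne hij with hlt | hlt
  · exact period i j hlt hj hrot
  · exact period j i hlt hi hrot.symm

lemma card_filter_card_necklaceWords_lt_le (m : ℕ) :
    ((necklaces m).filter fun q => (necklaceWords m q).card < m).card ≤ m / 2 * 2 ^ (m / 2) := by
  -- such a necklace is the image of a word of period at most `m / 2`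
  have hsub : (necklaces m).filter (fun q => (necklaceWords m q).card < m) ⊆
      ((Finset.Icc 1 (m / 2)).biUnion fun z =>
        (words m).filter fun u => u.rotate z = u).image (↑) := by
    intro q hq
    obtain ⟨hq, hlt⟩ := Finset.mem_filter.1 hq
    obtain ⟨u, hu, rfl⟩ := Finset.mem_image.1 hq
    obtain ⟨z, hz, hzu⟩ := exists_rotate_eq_self_of_card_lt (mem_words.1 hu) hlt
    exact Finset.mem_image_of_mem _ (Finset.mem_biUnion.2 ⟨z, hz, Finset.mem_filter.2 ⟨hu, hzu⟩⟩)
  calc _ ≤ _ := (Finset.card_le_card hsub).trans Finset.card_image_le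
    _ ≤ ∑ z ∈ Finset.Icc 1 (m / 2), ((words m).filter fun u => u.rotate z = u).card :=
        Finset.card_biUnion_le
    _ ≤ ∑ z ∈ Finset.Icc 1 (m / 2), 2 ^ (m / 2) := Finset.sum_le_sum fun z hz => by
        obtain ⟨hz1, hz2⟩ := Finset.mem_Icc.1 hz
        exact (card_filter_rotate_eq_self_le hz1 (by omega)).trans
          (Nat.pow_le_pow_right two_pos hz2)
    _ = m / 2 * 2 ^ (m / 2) := by simp

lemma two_mul_add_one_mul_le_two_pow {k : ℕ} (hk : 8 ≤ k) : (2 * k + 1) * k ≤ 2 ^ k := by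
  induction k, hk using Nat.le_induction with
  | base => norm_num
  | succ k hk ih => rw [pow_succ]; nlinarith

theorem mul_card_necklaces_le {m : ℕ} (hm : 16 ≤ m) : m * (necklaces m).card ≤ 2 ^ (m + 1) := by
  set short := (necklaces m).filter fun q => (necklaceWords m q).card < m
  set long := (necklaces m).filter fun q => ¬(necklaceWords m q).card < m
  have hlong : m * long.card ≤ 2 ^ m :=
    calc m * long.card = long.card • m := by rw [smul_eq_mul, mul_comm]
      _ ≤ ∑ q ∈ long, (necklaceWords m q).card :=
          Finset.card_nsmul_le_sum _ _ _ fun q hq => not_lt.1 (Finset.mem_filter.1 hq).2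
      _ ≤ ∑ q ∈ necklaces m, (necklaceWords m q).card :=
          Finset.sum_le_sum_of_subset (Finset.filter_subset _ _)
      _ = 2 ^ m := by
          rw [← card_words m, Finset.card_eq_sum_card_image ((↑) : List Bool → Cycle Bool)]
          rfl
  have hshort : m * short.card ≤ 2 ^ m :=
    calc m * short.card ≤ (2 * (m / 2) + 1) * (m / 2) * 2 ^ (m / 2) := by
          rw [mul_assoc]
          exact Nat.mul_le_mul (by omega) (card_filter_card_necklaceWords_lt_le m)
      _ ≤ 2 ^ (m / 2) * 2 ^ (m / 2) :=
          Nat.mul_le_mul_right _ (two_mul_add_one_mul_le_two_pow (by omega))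
      _ ≤ 2 ^ m := by rw [← pow_add]; exact Nat.pow_le_pow_right two_pos (by omega)
  calc m * (necklaces m).card = m * short.card + m * long.card := by
        rw [← mul_add, Finset.card_filter_add_card_filter_not]
    _ ≤ 2 ^ (m + 1) := by rw [pow_succ]; omega

section Chunks

variable {α : Type*}

def chunks (L : ℕ) : ℕ → List α → List (List α)
  | 0, w => [w]
  | k + 1, w => w.take L :: chunks L k (w.drop L)

@[simp] lemma flatten_chunks (L k : ℕ) (w : List α) : (chunks L k w).flatten = w := by
  induction k generalizing w with
  | zero => simp [chunks]
  | succ k ih => simp [chunks, ih]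

@[simp] lemma length_chunks (L k : ℕ) (w : List α) : (chunks L k w).length = k + 1 := by
  induction k generalizing w with
  | zero => rfl
  | succ k ih => simp [chunks, ih]

lemma exists_perm_of_forall₂_isRotated {U U' : List (List α)}
    (h : List.Forall₂ List.IsRotated U U') :
    ∃ l l' : List (List α), l.Perm l' ∧ l.flatten = U.flatten ∧ l'.flatten = U'.flatten ∧
      l.length = 2 * U.length := by
  induction h with
  | nil => exact ⟨[], [], .nil, rfl, rfl, rfl⟩
  | @cons u _ U _ hu _ ih =>
    obtain ⟨l, l', hp, hf, hf', hlen⟩ := ih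
    obtain ⟨i, rfl⟩ := hu
    set j := i % u.length
    refine ⟨u.take j :: u.drop j :: l, u.drop j :: u.take j :: l',
      (List.Perm.swap _ _ _).trans ((hp.cons _).cons _), ?_, ?_, by simp [hlen]; ring⟩
    · simp [hf, ← List.append_assoc]
    · simp [hf', List.rotate_eq_drop_append_take_mod, j]

end Chunks

def chunkCycles (L k : ℕ) (w : List Bool) : List (Cycle Bool) := (chunks L k w).map (↑)

theorem ResilientBE.injOn_chunkCycles {n t te L k : ℕ} {C : Finset (List Bool)}
    (hres : ResilientBE t te C) (hlen : ∀ w ∈ C, w.length = n) (htn : t + 1 ≤ n)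
    (hk : 2 * (k + 1) ≤ t + 1) : Set.InjOn (chunkCycles L k) C := by
  intro c hc c' hc' h
  have hrot : List.Forall₂ List.IsRotated (chunks L k c) (chunks L k c') := by
    have h' : List.Forall₂ (· = ·) (chunkCycles L k c) (chunkCycles L k c') := by
      rw [List.forall₂_eq_eq_eq]; exact h
    simp only [chunkCycles, List.forall₂_map_left_iff, List.forall₂_map_right_iff] at h'
    exact h'.imp fun _ _ => Cycle.coe_eq_coe.1
  obtain ⟨l, l', hp, hf, hf', hl⟩ := exists_perm_of_forall₂_isRotated hrot
  rw [flatten_chunks] at hf hf'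
  exact hres.eq_of_perm hc hc' hp (by simpa [hl] using hk) (by rw [hf, hlen c hc]; omega)
    (by simp [hf]) (by simp [hf'])

lemma card_image_chunkCycles_le (L : ℕ) :
    ∀ k m : ℕ, k * L ≤ m → ((words m).image (chunkCycles L k)).card ≤
      (necklaces L).card ^ k * (necklaces (m - k * L)).card
  | 0, m, _ => by
    rw [show (words m).image (chunkCycles L 0) = (necklaces m).image fun q => [q] by
      rw [necklaces, Finset.image_image]; rfl]
    simpa using Finset.card_image_le
  | k + 1, m, hkm => by
    have hsub : (words m).image (chunkCycles L (k + 1)) ⊆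
        Finset.image₂ List.cons (necklaces L) ((words (m - L)).image (chunkCycles L k)) := by
      intro x hx
      obtain ⟨w, hw, rfl⟩ := Finset.mem_image.1 hx
      rw [mem_words] at hw
      exact Finset.mem_image₂_of_mem
        (Finset.mem_image_of_mem _ (mem_words.2 (by simp [hw]; nlinarith)))
        (Finset.mem_image_of_mem _ (mem_words.2 (by simp [hw])))
    have hkm' : k * L ≤ m - L := by rw [add_one_mul] at hkm; omega
    calc _ ≤ (necklaces L).card * ((words (m - L)).image (chunkCycles L k)).card :=
          (Finset.card_le_card hsub).trans (Finset.card_image₂_le _ _ _)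
      _ ≤ (necklaces L).card * ((necklaces L).card ^ k * (necklaces (m - L - k * L)).card) :=
          Nat.mul_le_mul_left _ (card_image_chunkCycles_le L k (m - L) hkm')
      _ = _ := by rw [Nat.sub_sub, add_comm L, ← add_one_mul, pow_succ]; ring

theorem ResilientBE.card_mul_pow_le {n t te L j : ℕ} {C : Finset (List Bool)}
    (hres : ResilientBE t te C) (hlen : ∀ w ∈ C, w.length = n) (htn : t + 1 ≤ n)
    (hj : 0 < j) (hjt : 2 * j ≤ t + 1) (hL : 16 ≤ L) (hjL : j * L ≤ n) :
    C.card * L ^ j ≤ 2 ^ (n + j) := by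
  obtain ⟨k, rfl⟩ : ∃ k, j = k + 1 := ⟨j - 1, by omega⟩
  rw [add_one_mul] at hjL
  have hC : C.card ≤ (necklaces L).card ^ k * (necklaces (n - k * L)).card :=
    calc C.card = (C.image (chunkCycles L k)).card :=
          (Finset.card_image_of_injOn (hres.injOn_chunkCycles hlen htn hjt)).symm
      _ ≤ ((words n).image (chunkCycles L k)).card :=
          Finset.card_le_card (Finset.image_subset_image fun w hw => mem_words.2 (hlen w hw))
      _ ≤ _ := card_image_chunkCycles_le L k n (by omega)
  calc C.card * L ^ (k + 1)
      ≤ (necklaces L).card ^ k * (necklaces (n - k * L)).card * L ^ (k + 1) :=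
        Nat.mul_le_mul_right _ hC
    _ = (L * (necklaces L).card) ^ k * (L * (necklaces (n - k * L)).card) := by ring
    _ ≤ (2 ^ (L + 1)) ^ k * ((n - k * L) * (necklaces (n - k * L)).card) :=
        Nat.mul_le_mul (Nat.pow_le_pow_left (mul_card_necklaces_le hL) k)
          (Nat.mul_le_mul_right _ (by omega))
    _ ≤ (2 ^ (L + 1)) ^ k * 2 ^ (n - k * L + 1) :=
        Nat.mul_le_mul_left _ (mul_card_necklaces_le (by omega))
    _ = 2 ^ (n + (k + 1)) := by
        rw [← pow_mul, ← pow_add, show (L + 1) * k = k * L + k by ring]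
        congr 1
        omega

lemma resilientBE_singleton (t te : ℕ) (w : List Bool) : ResilientBE t te {w} := by
  simp [ResilientBE]

theorem ResilientBE.card_lt_two_pow {n t te : ℕ} {C : Finset (List Bool)}
    (hres : ResilientBE t te C) (hlen : ∀ w ∈ C, w.length = n) (hn : 2 ≤ n)
    (hst : 1 ≤ t + te) (htn : t + 1 ≤ n) : C.card < 2 ^ n := by
  obtain ⟨p, hp⟩ : ∃ p, n = p + 2 := ⟨n - 2, by omega⟩
  set x := true :: List.replicate (p + 1) false
  obtain ⟨y, hy, hC⟩ : ∃ y ∈ words n, x ∈ C → y ∉ C := by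
    rcases Nat.eq_zero_or_pos t with rfl | ht
    · refine ⟨false :: List.replicate (p + 1) false, by simp [hp], fun hx hy => ?_⟩
      have hdist : editDist x (false :: List.replicate (p + 1) false) ≤ te :=
        (editDist_cons_cons_le _ _ _ _).trans (by simp; omega)
      simpa [x] using hres.eq_of_editDist_le hx hy (by simp [x]) (by simp) hdist
    · refine ⟨x.rotate 1, by simp [x, hp], fun hx hy => ?_⟩
      have := hres.injOn_chunkCycles (L := 0) (k := 0) hlen htn (by omega) hx hy
        (by simpa [chunkCycles, chunks, Cycle.coe_eq_coe] using ⟨1, rfl⟩)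
      simp [x, List.replicate_succ] at this
  have hsub : C ⊆ words n := fun w hw => mem_words.2 (hlen w hw)
  have hx : x ∈ words n := by simp [x, hp]
  calc C.card < (words n).card := Finset.card_lt_card <| (Finset.ssubset_iff_of_subset hsub).2 <|
        by by_cases hxC : x ∈ C; exacts [⟨y, hy, hC hxC⟩, ⟨x, hx, hxC⟩]
    _ = 2 ^ n := card_words n

lemma logb_le_sub_logb_of_mul_le {a b e : ℕ} (ha : 0 < a) (hb : 0 < b) (h : a * b ≤ 2 ^ e) :
    logb 2 a ≤ e - logb 2 b := by
  have h' : ((a * b : ℕ) : ℝ) ≤ (2 : ℝ) ^ e := by exact_mod_cast h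
  have := logb_le_logb_of_le one_lt_two (by positivity) h'
  rw [Nat.cast_mul, logb_mul (by positivity) (by positivity), logb_pow,
    logb_self_eq_one one_lt_two] at this
  linarith

lemma mul_logb_sub_one_le_logb_choose {n k : ℕ} {y : ℝ} (hy : 2 ≤ y) (hky : k * y ≤ n) :
    k * (logb 2 y - 1) ≤ logb 2 (n.choose k) := by
  rcases Nat.eq_zero_or_pos k with rfl | hk
  · simp
  have hkR : (0 : ℝ) < k := by exact_mod_cast hk
  have hkn : k ≤ n := by exact_mod_cast (show (k : ℝ) ≤ n by nlinarith)
  have hbase : y / 2 ≤ ((n + 1 - k : ℕ) : ℝ) / k := by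
    rw [Nat.cast_sub (by omega), le_div_iff₀ hkR]
    push_cast
    nlinarith
  have hpow : (y / 2) ^ k ≤ n.choose k :=
    calc (y / 2) ^ k ≤ (((n + 1 - k : ℕ) : ℝ) / k) ^ k := by gcongr
      _ = ((n + 1 - k : ℕ) ^ k : ℝ) / (k ^ k : ℕ) := by rw [div_pow, Nat.cast_pow]
      _ ≤ ((n + 1 - k : ℕ) ^ k : ℝ) / k.factorial := by
          gcongr
          exact_mod_cast Nat.factorial_le_pow k
      _ ≤ n.choose k := Nat.pow_le_choose k n
  calc k * (logb 2 y - 1) = logb 2 ((y / 2) ^ k) := by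
        rw [logb_pow, logb_div (by positivity) two_ne_zero, logb_self_eq_one one_lt_two]
    _ ≤ logb 2 (n.choose k) := logb_le_logb_of_le one_lt_two (by positivity) hpow

lemma logb_two_pow_sub_one_le {n : ℕ} (hn : 1 ≤ n) :
    logb 2 ((2 : ℝ) ^ n - 1) ≤ n - ((2 : ℝ) ^ n)⁻¹ := by
  set x : ℝ := 2 ^ n
  have hx : 2 ≤ x := by simpa using pow_le_pow_right₀ one_le_two hn
  have hxinv : x⁻¹ ≤ 2⁻¹ := inv_anti₀ two_pos hx
  have hlog : log (x - 1) ≤ n * log 2 - x⁻¹ := by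
    have h1 : log (1 - x⁻¹) ≤ -x⁻¹ := by
      linarith [log_le_sub_one_of_pos (show 0 < 1 - x⁻¹ by linarith)]
    rw [show x - 1 = x * (1 - x⁻¹) by field_simp, log_mul (by positivity) (by linarith), log_pow]
    linarith
  have hlog2 : 0 < log 2 := log_pos one_lt_two
  rw [logb, div_le_iff₀ hlog2]
  nlinarith [log_two_lt_d9, inv_pos.2 (show 0 < x by positivity)]

namespace ResilientBE

variable {n t te : ℕ} {C : Finset (List Bool)}

theorem mul_logb_sub_one_le_redundancy (hres : ResilientBE t te C)
    (hlen : ∀ w ∈ C, w.length = n) (htn : t + 1 ≤ n) (hC : C.Nonempty) {y : ℝ} (hy : 2 ≤ y)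
    (hte : te * y ≤ n) : te * (logb 2 y - 1) ≤ n - logb 2 C.card := by
  have hten : te ≤ n := by exact_mod_cast (show (te : ℝ) ≤ n by nlinarith)
  have := logb_le_sub_logb_of_mul_le hC.card_pos (Nat.choose_pos hten)
    (hres.card_mul_choose_le hlen htn)
  linarith [mul_logb_sub_one_le_logb_choose hy hte]

theorem mul_logb_sub_two_le_redundancy (hres : ResilientBE t te C)
    (hlen : ∀ w ∈ C, w.length = n) (htn : t + 1 ≤ n) (hC : C.Nonempty) (ht : 1 ≤ t) {y : ℝ}
    (hy : 32 ≤ y) (hty : t * y ≤ n) : t * (logb 2 y - 2) / 2 ≤ n - logb 2 C.card := by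
  -- `j` chunks of length `L`, the last one taking the remainder
  set j := (t + 1) / 2
  set L := n / j
  have hj : 0 < j := by omega
  have hjR : (0 : ℝ) < j := by exact_mod_cast hj
  have htj : (t : ℝ) ≤ 2 * j := by exact_mod_cast (show t ≤ 2 * j by omega)
  have hjy : (j : ℝ) * y ≤ n :=
    le_trans (by gcongr; exact_mod_cast (show j ≤ t by omega)) hty
  have hLy : y / 2 ≤ L := by
    have hnL : (n : ℝ) < L * j + j := by exact_mod_cast Nat.lt_div_mul_add hj
    nlinarith
  have hL : 16 ≤ L := by exact_mod_cast (show (16 : ℝ) ≤ L by linarith)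
  have hcard := hres.card_mul_pow_le hlen htn hj (by omega) hL (Nat.mul_div_le n j)
  have hlogC := logb_le_sub_logb_of_mul_le hC.card_pos (by positivity) hcard
  have hlogL : logb 2 y - 1 ≤ logb 2 L := by
    rw [← logb_self_eq_one one_lt_two, ← logb_div (by positivity) two_ne_zero]
    exact logb_le_logb_of_le one_lt_two (by positivity) hLy
  have hlogy : 2 ≤ logb 2 y := by
    rw [le_logb_iff_rpow_le one_lt_two (by positivity)]
    norm_num
    linarith
  push_cast at hlogC
  rw [logb_pow] at hlogC
  nlinarith

theorem logb_mul_le_redundancy (hres : ResilientBE t te C)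
    (hlen : ∀ w ∈ C, w.length = n) (htn : t + 1 ≤ n) (hC : C.Nonempty) {y : ℝ} (hy : 32 ≤ y)
    (hpoly : ((t + te : ℕ) : ℝ) * y ≤ n) : (t + te : ℕ) * logb 2 y / 8 ≤ n - logb 2 C.card := by
  push_cast at hpoly ⊢
  have hlogy : 5 ≤ logb 2 y := by
    rw [le_logb_iff_rpow_le one_lt_two (by positivity)]
    norm_num
    linarith
  have hte : (0 : ℝ) ≤ te := te.cast_nonneg
  have hedit : te * logb 2 y / 2 ≤ n - logb 2 C.card :=
    le_trans (by nlinarith)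
      (hres.mul_logb_sub_one_le_redundancy hlen htn hC (by linarith) (y := y) (by nlinarith))
  have hbreak : t * logb 2 y / 4 ≤ n - logb 2 C.card := by
    rcases Nat.eq_zero_or_pos t with rfl | ht
    · norm_num
      nlinarith
    · exact le_trans (by nlinarith)
        (hres.mul_logb_sub_two_le_redundancy hlen htn hC ht hy (by nlinarith))
  nlinarith

theorem eps_mul_logb_le_redundancy (hres : ResilientBE t te C)
    (hlen : ∀ w ∈ C, w.length = n) (htn : t + 1 ≤ n) (hC : C.Nonempty) {ε : ℝ}
    (h32 : 32 ≤ (n : ℝ) ^ ε) (hpoly : ((t + te : ℕ) : ℝ) * (n : ℝ) ^ ε ≤ n) :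
    ε / 8 * (t + te : ℕ) * logb 2 n ≤ n - logb 2 C.card := by
  have hn : (0 : ℝ) < n := by exact_mod_cast (show 0 < n by omega)
  have := hres.logb_mul_le_redundancy hlen htn hC h32 hpoly
  rw [logb_rpow_eq_mul_logb_of_pos hn] at this
  linarith

theorem inv_two_pow_le_redundancy (hres : ResilientBE t te C)
    (hlen : ∀ w ∈ C, w.length = n) (hn : 2 ≤ n) (hst : 1 ≤ t + te) (htn : t + 1 ≤ n)
    (hC : C.Nonempty) : ((2 : ℝ) ^ n)⁻¹ ≤ n - logb 2 C.card := by
  have hcard : (C.card : ℝ) ≤ 2 ^ n - 1 := by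
    have := hres.card_lt_two_pow hlen hn hst htn
    have : (C.card : ℝ) + 1 ≤ 2 ^ n := by exact_mod_cast this
    linarith
  have := (logb_le_logb_of_le one_lt_two (by exact_mod_cast hC.card_pos) hcard).trans
    (logb_two_pow_sub_one_le (by omega))
  linarith

theorem mul_logb_le_redundancy_of_lt (hres : ResilientBE t te C)
    (hlen : ∀ w ∈ C, w.length = n) (hn : 2 ≤ n) (hst : 1 ≤ t + te) (htn : t + 1 ≤ n)
    (hC : C.Nonempty) (hsn : ((t + te : ℕ) : ℝ) ≤ n) {N : ℕ} (hnN : n < N) :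
    ((2 : ℝ) ^ N)⁻¹ / N ^ 2 * (t + te : ℕ) * logb 2 n ≤ n - logb 2 C.card := by
  have hnN' : (n : ℝ) ≤ N := by exact_mod_cast hnN.le
  have hN : (0 : ℝ) < N := by linarith [(show (2 : ℝ) ≤ n by exact_mod_cast hn)]
  have hlogn : logb 2 n ≤ n := by
    have := logb_le_logb_of_le one_lt_two (by positivity)
      (show (n : ℝ) ≤ 2 ^ n by exact_mod_cast (Nat.lt_two_pow_self).le)
    rwa [logb_pow, logb_self_eq_one one_lt_two, mul_one] at this
  calc _ ≤ ((2 : ℝ) ^ N)⁻¹ / N ^ 2 * N * N := by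
        gcongr
        · exact logb_nonneg one_lt_two (by exact_mod_cast (show 1 ≤ n by omega))
        · exact_mod_cast hsn.trans hnN'
        · exact hlogn.trans hnN'
    _ = ((2 : ℝ) ^ N)⁻¹ := by field_simp
    _ ≤ ((2 : ℝ) ^ n)⁻¹ := by gcongr; norm_num
    _ ≤ _ := hres.inv_two_pow_le_redundancy hlen hn hst htn hC

end ResilientBE

lemma le_rpow_of_ceil_rpow_inv_le {a ε : ℝ} (ha : 0 ≤ a) (hε : 0 < ε) {n : ℕ}
    (hn : ⌈a ^ ε⁻¹⌉₊ ≤ n) : a ≤ (n : ℝ) ^ ε :=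
  calc a = (a ^ ε⁻¹) ^ ε := by rw [← rpow_mul ha, inv_mul_cancel₀ hε.ne', rpow_one]
    _ ≤ (n : ℝ) ^ ε := by gcongr; exact (Nat.le_ceil _).trans (by exact_mod_cast hn)

lemma mul_rpow_le_of_le_rpow_one_sub {x ε : ℝ} {n : ℕ} (hn : 0 < n)
    (hx : x ≤ (n : ℝ) ^ (1 - ε)) : x * (n : ℝ) ^ ε ≤ n :=
  calc _ ≤ (n : ℝ) ^ (1 - ε) * (n : ℝ) ^ ε := by gcongr
    _ = n := by rw [← rpow_add (by positivity), sub_add_cancel, rpow_one]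

theorem redundancy_lower_bound_polynomial_regime :
    ∀ ε : ℝ, 0 < ε → ε < 1 →
      ∃ c : ℝ, 0 < c ∧
        ∀ n t te : ℕ, 2 ≤ n → 1 ≤ t + te →
          ((t + te : ℕ) : ℝ) ≤ (n : ℝ) ^ (1 - ε) → t + 1 ≤ n →
          ∀ C : Finset (List Bool),
            (∀ w ∈ C, w.length = n) → ResilientBE t te C →
            c * ((t + te : ℕ) : ℝ) * Real.logb 2 (n : ℝ)
              ≤ (n : ℝ) - Real.logb 2 (C.card : ℝ) := by
  intro ε hε _
  set N := ⌈(32 : ℝ) ^ ε⁻¹⌉₊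
  have hN : (0 : ℝ) < N := Nat.cast_pos.2 (Nat.ceil_pos.2 (by positivity))
  refine ⟨min (ε / 8) (((2 : ℝ) ^ N)⁻¹ / N ^ 2), lt_min (by positivity) (by positivity), ?_⟩
  intro n t te hn hst hpoly htn C hlen hres
  -- `logb 2 0 = logb 2 1 = 0`: the empty code has the redundancy of a one-word code
  wlog hC : C.Nonempty generalizing C
  · rw [Finset.not_nonempty_iff_eq_empty] at hC
    subst hC
    simpa using this {List.replicate n false} (by simp) (resilientBE_singleton t te _) (by simp)
  have hpoly' := mul_rpow_le_of_le_rpow_one_sub (by omega) hpoly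
  have hlogn : 0 ≤ logb 2 n := logb_nonneg one_lt_two (by exact_mod_cast (show 1 ≤ n by omega))
  rcases le_or_gt N n with hNn | hNn
  · calc _ ≤ ε / 8 * ((t + te : ℕ) : ℝ) * logb 2 n := by gcongr; exact min_le_left _ _
      _ ≤ _ := hres.eps_mul_logb_le_redundancy hlen htn hC
          (le_rpow_of_ceil_rpow_inv_le (by norm_num) hε hNn) hpoly'
  · have hsn : ((t + te : ℕ) : ℝ) ≤ n := le_trans (le_mul_of_one_le_right (by positivity)
      (one_le_rpow (by exact_mod_cast (show 1 ≤ n by omega)) hε.le)) hpoly'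
    calc _ ≤ ((2 : ℝ) ^ N)⁻¹ / N ^ 2 * ((t + te : ℕ) : ℝ) * logb 2 n := by
          gcongr; exact min_le_right _ _
      _ ≤ _ := hres.mul_logb_le_redundancy_of_lt hlen hn hst htn hC hsn hNn
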